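/- arXiv:2001.10846 — 6 statements merged into one kernel-verified Lean document; each statement's English description precedes it below -/
import Mathlib

section
/- Let -∞ < a < b < ∞, γ > 0, 0 < α < 1, and let f(t) = (t−a)^γ on [a,b]. Then for every t ∈ (a,b], the Caputo–Fabrizio fractional derivative of order α satisfies ᶜᶠ_aDᵅf(t) = (γ/α)(t−a)^{γ−1}·[1 − Γ(γ)·E_{1,γ}(−(α/(1−α))(t−a))], where E_{1,γ} is the Mittag-Leffler function. -/
/-!
After the substitution `s = τ - a` the derivative is `γ / (1 - α)` times the convolution
`∫₀ˣ s^(γ-1) e^{-λ(x-s)} ds` with `x = t - a`, `λ = α / (1 - α)`. Expanding the exponential and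
integrating termwise against Beta integrals `∫₀ˣ s^(γ-1) (x-s)^k ds = Γ(γ) k! x^(γ+k) / Γ(γ+k+1)`
evaluates the convolution as `Γ(γ) x^γ E_{1,γ+1}(-λx)`, and the recurrence
`E_{1,γ}(z) = 1/Γ(γ) + z E_{1,γ+1}(z)` turns this into the stated form.
-/

open MeasureTheory Filter Set

/-- Caputo–Fabrizio fractional derivative of order `α` with base point `a`,
expressed in terms of the a.e. derivative `f'`. -/
noncomputable def cfD (a α : ℝ) (f' : ℝ → ℝ) (t : ℝ) : ℝ :=
  (1 / (1 - α)) * ∫ τ in a..t, f' τ * Real.exp (-(α / (1 - α)) * (t - τ))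

/-- Mittag-Leffler function `E_{ρ,ω}(t) = ∑_{k≥0} t^k / Γ(ρk + ω)`. -/
noncomputable def mittagLeffler (ρ ω t : ℝ) : ℝ :=
  ∑' k : ℕ, t ^ k / Real.Gamma (ρ * (k : ℝ) + ω)

open scoped Nat

theorem integral_rpow_mul_one_sub_rpow {u v : ℝ} (hu : 0 < u) (hv : 0 < v) :
    ∫ x in (0:ℝ)..1, x ^ (u - 1) * (1 - x) ^ (v - 1) =
      Real.Gamma u * Real.Gamma v / Real.Gamma (u + v) := by
  apply Complex.ofReal_injective
  rw [← intervalIntegral.integral_ofReal]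
  push_cast
  rw [← Complex.Gamma_ofReal, ← Complex.Gamma_ofReal, ← Complex.Gamma_ofReal, Complex.ofReal_add,
    ← Complex.betaIntegral_eq_Gamma_mul_div _ _ (by simpa) (by simpa)]
  refine intervalIntegral.integral_congr fun x hx => ?_
  rw [uIcc_of_le zero_le_one] at hx
  rw [Complex.ofReal_cpow hx.1, Complex.ofReal_cpow (sub_nonneg.2 hx.2)]
  push_cast
  rfl

theorem integral_rpow_mul_sub_pow {γ x : ℝ} (hγ : 0 < γ) (hx : 0 < x) (k : ℕ) :
    ∫ s in (0:ℝ)..x, s ^ (γ - 1) * (x - s) ^ k =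
      Real.Gamma γ * k ! / Real.Gamma (γ + k + 1) * x ^ (γ + k) := by
  have hbeta : ∫ u in (0:ℝ)..1, u ^ (γ - 1) * (1 - u) ^ k =
      Real.Gamma γ * k ! / Real.Gamma (γ + k + 1) := by
    simpa only [add_sub_cancel_right, Real.Gamma_nat_eq_factorial, ← add_assoc,
      Real.rpow_natCast] using integral_rpow_mul_one_sub_rpow hγ (v := k + 1) (by positivity)
  have hscale : ∀ u ∈ uIcc (0:ℝ) 1, (x * u) ^ (γ - 1) * (x - x * u) ^ k =
      x ^ (γ - 1) * x ^ k * (u ^ (γ - 1) * (1 - u) ^ k) := by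
    intro u hu
    rw [uIcc_of_le zero_le_one] at hu
    rw [Real.mul_rpow hx.le hu.1, ← mul_one_sub, mul_pow]
    ring
  have hpow : x * (x ^ (γ - 1) * x ^ k) = x ^ (γ + k) := by
    rw [Real.rpow_add hx, ← Real.rpow_natCast, ← mul_assoc, ← Real.rpow_one_add' hx.le (by linarith)]
    ring_nf
  have hsub := intervalIntegral.smul_integral_comp_mul_left
    (fun s => s ^ (γ - 1) * (x - s) ^ k) x (a := 0) (b := 1)
  rw [mul_zero, mul_one] at hsub
  rw [← hsub, smul_eq_mul, intervalIntegral.integral_congr hscale,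
    intervalIntegral.integral_const_mul, hbeta, ← hpow]
  ring

theorem Real.expSeries_div_hasSum_exp (x : ℝ) : HasSum (fun n => x ^ n / n !) (Real.exp x) := by
  rw [Real.exp_eq_exp_ℝ]
  exact NormedSpace.expSeries_div_hasSum_exp x

theorem summable_mittagLeffler_one {ω : ℝ} (hω : 0 < ω) (z : ℝ) :
    Summable fun k : ℕ => z ^ k / Real.Gamma (1 * k + ω) := by
  refine summable_of_ratio_norm_eventually_le (r := 1 / 2) (by norm_num) ?_
  filter_upwards [eventually_ge_atTop ⌈2 * |z|⌉₊] with k hk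
  have hkz : 2 * |z| ≤ k := Nat.ceil_le.1 hk
  have hkω : 0 < k + ω := by positivity
  have hΓ : 0 < Real.Gamma (1 * k + ω) := Real.Gamma_pos_of_pos (by positivity)
  have hΓsucc : Real.Gamma (1 * (k + 1 : ℕ) + ω) = (k + ω) * Real.Gamma (1 * k + ω) := by
    rw [one_mul, one_mul, Nat.cast_succ, add_right_comm, Real.Gamma_add_one hkω.ne']
  have hratio : |z| / (k + ω) ≤ 1 / 2 := by
    rw [div_le_iff₀ hkω]
    linarith
  rw [hΓsucc, norm_div, norm_div, norm_pow, norm_pow, Real.norm_eq_abs,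
    Real.norm_of_nonneg hΓ.le, Real.norm_of_nonneg (by positivity)]
  calc |z| ^ (k + 1) / ((k + ω) * Real.Gamma (1 * k + ω))
      = |z| / (k + ω) * (|z| ^ k / Real.Gamma (1 * k + ω)) := by rw [pow_succ]; field_simp
    _ ≤ 1 / 2 * (|z| ^ k / Real.Gamma (1 * k + ω)) := by gcongr

theorem mittagLeffler_one_eq_inv_Gamma_add {ω : ℝ} (hω : 0 < ω) (z : ℝ) :
    mittagLeffler 1 ω z = (Real.Gamma ω)⁻¹ + z * mittagLeffler 1 (ω + 1) z := by
  have hshift : ∀ k : ℕ, z ^ (k + 1) / Real.Gamma (1 * (k + 1 : ℕ) + ω) =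
      z * (z ^ k / Real.Gamma (1 * k + (ω + 1))) := by
    intro k
    push_cast
    rw [pow_succ, mul_comm (z ^ k), mul_div_assoc]
    ring_nf
  rw [mittagLeffler, mittagLeffler, tsum_eq_zero_add', ← tsum_mul_left]
  · simp only [hshift, pow_zero, Nat.cast_zero, mul_zero, zero_add, one_div]
  · simpa only [hshift] using (summable_mittagLeffler_one (by positivity) z).mul_left z

theorem integral_rpow_mul_exp_mul_sub {γ x : ℝ} (hγ : 0 < γ) (hx : 0 < x) (c : ℝ) :
    ∫ s in (0:ℝ)..x, s ^ (γ - 1) * Real.exp (c * (x - s)) =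
      Real.Gamma γ * x ^ γ * mittagLeffler 1 (γ + 1) (c * x) := by
  have hterm : ∀ k : ℕ, ∫ s in (0:ℝ)..x, s ^ (γ - 1) * ((c * (x - s)) ^ k / k !) =
      Real.Gamma γ * x ^ γ * ((c * x) ^ k / Real.Gamma (1 * k + (γ + 1))) := by
    intro k
    have hΓ : Real.Gamma (γ + k + 1) ≠ 0 := (Real.Gamma_pos_of_pos (by positivity)).ne'
    have hintegrand : (fun s => s ^ (γ - 1) * ((c * (x - s)) ^ k / k !)) =
        fun s => c ^ k / k ! * (s ^ (γ - 1) * (x - s) ^ k) := by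
      funext s
      rw [mul_pow]
      ring
    rw [hintegrand, intervalIntegral.integral_const_mul,
      integral_rpow_mul_sub_pow hγ hx k, Real.rpow_add hx, Real.rpow_natCast,
      show 1 * (k : ℝ) + (γ + 1) = γ + k + 1 by ring, mul_pow]
    field_simp
  have hsum := intervalIntegral.hasSum_integral_of_dominated_convergence
    (F := fun (k : ℕ) (s : ℝ) => s ^ (γ - 1) * ((c * (x - s)) ^ k / k !))
    (f := fun s => s ^ (γ - 1) * Real.exp (c * (x - s)))
    (fun k s => s ^ (γ - 1) * ((|c| * x) ^ k / k !)) (μ := volume) (a := 0) (b := x)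
    (fun k => by fun_prop) ?bound
    (.of_forall fun s _ => (Real.summable_pow_div_factorial _).mul_left _) ?integrable
    (.of_forall fun s _ => (Real.expSeries_div_hasSum_exp _).mul_left _)
  · rw [mittagLeffler, ← tsum_mul_left, ← hsum.tsum_eq]
    exact tsum_congr hterm
  case bound =>
    refine fun k => .of_forall fun s hs => ?_
    rw [uIoc_of_le hx.le] at hs
    have hs0 : 0 ≤ s ^ (γ - 1) := Real.rpow_nonneg hs.1.le _
    rw [norm_mul, norm_div, norm_pow, Real.norm_of_nonneg hs0, RCLike.norm_natCast, norm_mul,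
      Real.norm_eq_abs, Real.norm_of_nonneg (sub_nonneg.2 hs.2)]
    gcongr
    · exact mul_nonneg (abs_nonneg c) (sub_nonneg.2 hs.2)
    · linarith [hs.1]
  case integrable =>
    simp_rw [tsum_mul_left, (Real.expSeries_div_hasSum_exp _).tsum_eq]
    exact (intervalIntegral.intervalIntegrable_rpow' (by linarith)).mul_const _

theorem cf_deriv_power_general (a b γ α : ℝ) (hγ : 0 < γ) (hα0 : 0 < α) :
    ∀ t ∈ Set.Ioc a b,
      cfD a α (fun τ => γ * (τ - a) ^ (γ - 1)) t =
        (γ / α) * (t - a) ^ (γ - 1) *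
          (1 - Real.Gamma γ * mittagLeffler 1 γ (-(α / (1 - α)) * (t - a))) := by
  intro t ht
  have hx : 0 < t - a := sub_pos.2 ht.1
  have hshift := intervalIntegral.integral_comp_sub_right
    (fun s => γ * (s ^ (γ - 1) * Real.exp (-(α / (1 - α)) * ((t - a) - s)))) a (a := a) (b := t)
  simp only [sub_sub_sub_cancel_right, sub_self] at hshift
  have hrate : 1 / (1 - α) = α / (1 - α) / α := by rw [div_right_comm, div_self hα0.ne']
  have hpow : (t - a) ^ γ = (t - a) ^ (γ - 1) * (t - a) := by
    rw [← Real.rpow_add_one hx.ne', sub_add_cancel]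
  rw [cfD, funext fun τ => mul_assoc _ _ _, hshift, intervalIntegral.integral_const_mul,
    integral_rpow_mul_exp_mul_sub hγ hx, mittagLeffler_one_eq_inv_Gamma_add hγ,
    mul_add, mul_inv_cancel₀ (Real.Gamma_pos_of_pos hγ).ne', hpow, hrate]
  ring

/-- For `f(t) = (t-a)^γ` on `[a,b]` (`γ > 0`, `0 < α < 1`) and every `t ∈ (a,b]`,
`ᶜᶠ_aDᵅf(t) = (γ/α)(t-a)^{γ-1}[1 - Γ(γ)E_{1,γ}(-(α/(1-α))(t-a))]`. -/
theorem cf_deriv_power (a b γ α : ℝ) (hab : a < b) (hγ : 0 < γ)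
    (hα0 : 0 < α) (hα1 : α < 1) :
    ∀ t ∈ Set.Ioc a b,
      cfD a α (fun τ => γ * (τ - a) ^ (γ - 1)) t =
        (γ / α) * (t - a) ^ (γ - 1) *
          (1 - Real.Gamma γ * mittagLeffler 1 γ (-(α / (1 - α)) * (t - a))) :=
  cf_deriv_power_general a b γ α hγ hα0
end

section
/- Let -∞ < a < b < ∞ and let f belong to W^{1,1}(a,b). Then for almost every t ∈ (a,b), lim_{α→1⁻} ᶜ_aDᵅf(t) = f'(t), i.e. the Caputo fractional derivative of order α converges to the ordinary derivative as α increases to 1, almost everywhere in (a,b). -/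
/-!
The kernel `s ↦ s ^ (-α) / Γ(1 - α) = (1 - α) s ^ (-α) / Γ(2 - α)` on `(0, t - a]` behaves like an
approximate identity as `α → 1⁻`: its total mass `(t - a) ^ (1 - α) / Γ(2 - α)` tends to `1`, and
on `[δ, t - a]` it is bounded by `(1 - α) δ ^ (-α) / Γ(2 - α) → 0`. Near `0` it is unbounded; there
one writes the decreasing kernel as a superposition of indicators,
`s ^ (-α) = δ ^ (-α) + ∫_s^δ α u ^ (-α - 1) du`, and Tonelli shows that the integral of a
nonnegative `φ` against it only depends, monotonically, on the primitives `u ↦ ∫_0^u φ`. At a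
one-sided Lebesgue point `t` of `f'` these primitives of `|f'(t - s) - f' t|` are `≤ ε u` for small
`u`, so the contribution near `0` is at most that of the constant `ε`, namely
`ε δ ^ (1 - α) / Γ(2 - α) → ε`. Almost every `t` is such a Lebesgue point.
-/

open MeasureTheory Filter Set

/-- Caputo fractional derivative of order `α` with base point `a`,
expressed in terms of the a.e. derivative `f'`. -/
noncomputable def caputoD (a α : ℝ) (f' : ℝ → ℝ) (t : ℝ) : ℝ :=
  (1 / Real.Gamma (1 - α)) * ∫ τ in a..t, f' τ * (t - τ) ^ (-α)

open scoped Topology ENNReal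

theorem lintegral_Ioc_mul_eq_of_eq_add_lintegral {φ k κ : ℝ → ℝ≥0∞} {δ : ℝ}
    (hφ : AEMeasurable φ (volume.restrict (Ioc 0 δ))) (hκ : Measurable κ)
    (hk : ∀ s ∈ Ioc 0 δ, k s = k δ + ∫⁻ u in Icc s δ, κ u) :
    ∫⁻ s in Ioc 0 δ, φ s * k s =
      (k δ * ∫⁻ s in Ioc 0 δ, φ s) + ∫⁻ u in Ioc 0 δ, κ u * ∫⁻ s in Ioc 0 u, φ s := by
  set F : ℝ × ℝ → ℝ≥0∞ := {p | p.1 ≤ p.2}.indicator fun p => φ p.1 * κ p.2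
  have hF : AEMeasurable F ((volume.restrict (Ioc 0 δ)).prod (volume.restrict (Ioc 0 δ))) :=
    (hφ.comp_fst.mul (hκ.comp measurable_snd).aemeasurable).indicator
      (measurableSet_le measurable_fst measurable_snd)
  have hsplit : ∀ s ∈ Ioc 0 δ, φ s * k s = k δ * φ s + ∫⁻ u in Ioc 0 δ, F (s, u) := by
    intro s hs
    have hIcc : Ici s ∩ Ioc 0 δ = Icc s δ := by
      ext u; simp only [mem_inter_iff, mem_Ici, mem_Ioc, mem_Icc]; grind
    have : ∫⁻ u in Ioc 0 δ, F (s, u) = φ s * ∫⁻ u in Icc s δ, κ u := by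
      rw [← hIcc, ← Measure.restrict_restrict measurableSet_Ici,
        ← lintegral_indicator measurableSet_Ici,
        ← lintegral_const_mul _ (hκ.indicator measurableSet_Ici)]
      congr 1; ext u
      by_cases h : s ≤ u <;> simp [F, indicator, h]
    rw [this, hk s hs]; ring
  have hswap : ∫⁻ s in Ioc 0 δ, ∫⁻ u in Ioc 0 δ, F (s, u) =
      ∫⁻ u in Ioc 0 δ, κ u * ∫⁻ s in Ioc 0 u, φ s := by
    rw [lintegral_lintegral_swap (f := fun s u => F (s, u)) hF]
    refine setLIntegral_congr_fun measurableSet_Ioc fun u hu => ?_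
    have hIoc : Iic u ∩ Ioc 0 δ = Ioc 0 u := by
      rw [inter_comm, Ioc_inter_Iic, min_eq_right hu.2]
    have hφu : AEMeasurable φ (volume.restrict (Ioc 0 u)) :=
      hφ.mono_measure (Measure.restrict_mono (Ioc_subset_Ioc_right hu.2) le_rfl)
    rw [mul_comm, ← lintegral_mul_const'' _ hφu, ← hIoc,
      ← Measure.restrict_restrict measurableSet_Iic, ← lintegral_indicator measurableSet_Iic]
    -- both integrands unfold to `if s ≤ u then φ s * κ u else 0`
    rfl
  rw [setLIntegral_congr_fun measurableSet_Ioc hsplit, lintegral_add_left' (hφ.const_mul _),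
    lintegral_const_mul'' _ hφ, hswap]

theorem lintegral_Ioc_mul_le_of_forall_lintegral_le {φ ψ k κ : ℝ → ℝ≥0∞} {δ : ℝ} (hδ : 0 < δ)
    (hφ : AEMeasurable φ (volume.restrict (Ioc 0 δ)))
    (hψ : AEMeasurable ψ (volume.restrict (Ioc 0 δ))) (hκ : Measurable κ)
    (hk : ∀ s ∈ Ioc 0 δ, k s = k δ + ∫⁻ u in Icc s δ, κ u)
    (hφψ : ∀ u ∈ Ioc 0 δ, ∫⁻ s in Ioc 0 u, φ s ≤ ∫⁻ s in Ioc 0 u, ψ s) :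
    ∫⁻ s in Ioc 0 δ, φ s * k s ≤ ∫⁻ s in Ioc 0 δ, ψ s * k s := by
  rw [lintegral_Ioc_mul_eq_of_eq_add_lintegral hφ hκ hk,
    lintegral_Ioc_mul_eq_of_eq_add_lintegral hψ hκ hk]
  gcongr k δ * ?_ + ?_
  · exact hφψ δ ⟨hδ, le_rfl⟩
  · exact setLIntegral_mono' measurableSet_Ioc fun u hu => mul_le_mul_right (hφψ u hu) _

theorem integral_rpow_neg {α : ℝ} (hα : α < 1) (c : ℝ) :
    ∫ s in 0..c, s ^ (-α) = c ^ (1 - α) / (1 - α) := by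
  rw [integral_rpow (Or.inl (by linarith)), neg_add_eq_sub,
    Real.zero_rpow (sub_ne_zero.2 hα.ne'), sub_zero]

theorem lintegral_Ioc_ofReal_rpow_neg {α δ : ℝ} (hα : α < 1) (hδ : 0 ≤ δ) :
    ∫⁻ s in Ioc 0 δ, ENNReal.ofReal (s ^ (-α)) = ENNReal.ofReal (δ ^ (1 - α) / (1 - α)) := by
  have hint : IntegrableOn (fun s : ℝ => s ^ (-α)) (Ioc 0 δ) :=
    (intervalIntegrable_iff_integrableOn_Ioc_of_le hδ).1
      (intervalIntegral.intervalIntegrable_rpow' (by linarith))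
  rw [← ofReal_integral_eq_lintegral_ofReal hint
      ((ae_restrict_mem measurableSet_Ioc).mono fun s hs => Real.rpow_nonneg hs.1.le _),
    ← intervalIntegral.integral_of_le hδ, integral_rpow_neg hα]

theorem ofReal_rpow_neg_eq_add_lintegral {α s δ : ℝ} (hα : 0 < α) (hs : 0 < s) (hsδ : s ≤ δ) :
    ENNReal.ofReal (s ^ (-α)) =
      ENNReal.ofReal (δ ^ (-α)) + ∫⁻ u in Icc s δ, ENNReal.ofReal (α * u ^ (-α - 1)) := by
  have h0 : (0 : ℝ) ∉ uIcc s δ := by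
    rw [uIcc_of_le hsδ]; exact fun h => hs.not_ge h.1
  have hint : IntegrableOn (fun u : ℝ => α * u ^ (-α - 1)) (Ioc s δ) :=
    (intervalIntegrable_iff_integrableOn_Ioc_of_le hsδ).1
      ((intervalIntegral.intervalIntegrable_rpow (Or.inr h0)).const_mul α)
  have hval : ∫ u in s..δ, α * u ^ (-α - 1) = s ^ (-α) - δ ^ (-α) := by
    rw [intervalIntegral.integral_const_mul, integral_rpow (Or.inr ⟨by linarith, h0⟩),
      sub_add_cancel]
    field_simp
    ring
  rw [setLIntegral_congr Ioc_ae_eq_Icc.symm, ← ofReal_integral_eq_lintegral_ofReal hint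
      ((ae_restrict_mem measurableSet_Ioc).mono fun u hu =>
        mul_nonneg hα.le (Real.rpow_nonneg (hs.trans hu.1).le _)),
    ← intervalIntegral.integral_of_le hsδ, hval,
    ← ENNReal.ofReal_add (Real.rpow_nonneg (hs.le.trans hsδ) _)
      (sub_nonneg.2 (Real.rpow_le_rpow_of_nonpos hs hsδ (by linarith))), add_sub_cancel]

theorem lintegral_Ioc_mul_ofReal_rpow_neg_le {φ : ℝ → ℝ≥0∞} {α δ ε : ℝ} (hα₀ : 0 < α)
    (hα₁ : α < 1) (hδ : 0 < δ) (hφ : AEMeasurable φ (volume.restrict (Ioc 0 δ)))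
    (hφδ : ∀ u ∈ Ioc 0 δ, ∫⁻ s in Ioc 0 u, φ s ≤ ENNReal.ofReal (ε * u)) :
    ∫⁻ s in Ioc 0 δ, φ s * ENNReal.ofReal (s ^ (-α)) ≤
      ENNReal.ofReal (ε * (δ ^ (1 - α) / (1 - α))) := by
  have hconst : ∀ u ∈ Ioc 0 δ, ∫⁻ s in Ioc 0 u, ENNReal.ofReal ε = ENNReal.ofReal (ε * u) :=
    fun u hu => by
      rw [setLIntegral_const, Real.volume_Ioc, sub_zero, ← ENNReal.ofReal_mul' hu.1.le]
  calc ∫⁻ s in Ioc 0 δ, φ s * ENNReal.ofReal (s ^ (-α))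
      ≤ ∫⁻ s in Ioc 0 δ, ENNReal.ofReal ε * ENNReal.ofReal (s ^ (-α)) :=
        lintegral_Ioc_mul_le_of_forall_lintegral_le hδ hφ aemeasurable_const (by fun_prop)
          (fun s hs => ofReal_rpow_neg_eq_add_lintegral hα₀ hs.1 hs.2)
          (fun u hu => (hφδ u hu).trans_eq (hconst u hu).symm)
    _ = ENNReal.ofReal (ε * (δ ^ (1 - α) / (1 - α))) := by
        rw [lintegral_const_mul' _ _ ENNReal.ofReal_ne_top,
          lintegral_Ioc_ofReal_rpow_neg hα₁ hδ.le, ← ENNReal.ofReal_mul'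
            (div_nonneg (Real.rpow_nonneg hδ.le _) (by linarith))]

theorem lintegral_Ioc_mul_ofReal_rpow_neg_le_add {φ : ℝ → ℝ≥0∞} {α c δ ε : ℝ} (hα₀ : 0 < α)
    (hα₁ : α < 1) (hδ : 0 < δ) (hδc : δ ≤ c) (hφ : AEMeasurable φ (volume.restrict (Ioc 0 c)))
    (hφδ : ∀ u ∈ Ioc 0 δ, ∫⁻ s in Ioc 0 u, φ s ≤ ENNReal.ofReal (ε * u)) :
    ∫⁻ s in Ioc 0 c, φ s * ENNReal.ofReal (s ^ (-α)) ≤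
      ENNReal.ofReal (ε * (δ ^ (1 - α) / (1 - α))) +
        ENNReal.ofReal (δ ^ (-α)) * ∫⁻ s in Ioc 0 c, φ s := by
  have hnear := lintegral_Ioc_mul_ofReal_rpow_neg_le hα₀ hα₁ hδ
    (hφ.mono_measure (Measure.restrict_mono (Ioc_subset_Ioc_right hδc) le_rfl)) hφδ
  have hfar : ∫⁻ s in Ioc δ c, φ s * ENNReal.ofReal (s ^ (-α)) ≤
      ENNReal.ofReal (δ ^ (-α)) * ∫⁻ s in Ioc 0 c, φ s :=
    calc ∫⁻ s in Ioc δ c, φ s * ENNReal.ofReal (s ^ (-α))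
        ≤ ∫⁻ s in Ioc δ c, ENNReal.ofReal (δ ^ (-α)) * φ s :=
          setLIntegral_mono' measurableSet_Ioc fun s hs => by
            rw [mul_comm]
            exact mul_le_mul' (ENNReal.ofReal_le_ofReal
              (Real.rpow_le_rpow_of_nonpos hδ hs.1.le (neg_nonpos.2 hα₀.le))) le_rfl
      _ ≤ ∫⁻ s in Ioc 0 c, ENNReal.ofReal (δ ^ (-α)) * φ s :=
          lintegral_mono_set (Ioc_subset_Ioc_left hδ.le)
      _ = ENNReal.ofReal (δ ^ (-α)) * ∫⁻ s in Ioc 0 c, φ s := lintegral_const_mul'' _ hφ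
  calc ∫⁻ s in Ioc 0 c, φ s * ENNReal.ofReal (s ^ (-α))
      = (∫⁻ s in Ioc 0 δ, φ s * ENNReal.ofReal (s ^ (-α))) +
          ∫⁻ s in Ioc δ c, φ s * ENNReal.ofReal (s ^ (-α)) := by
        rw [← lintegral_union measurableSet_Ioc (Ioc_disjoint_Ioc_of_le le_rfl),
          Ioc_union_Ioc_eq_Ioc hδ.le hδc]
    _ ≤ _ := add_le_add hnear hfar

theorem lintegral_Ioc_enorm_mul_rpow_neg_le {h : ℝ → ℝ} {α c δ ε : ℝ} (hα₀ : 0 < α)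
    (hα₁ : α < 1) (hδ : 0 < δ) (hδc : δ ≤ c) (hε : 0 ≤ ε) (hh : IntegrableOn h (Ioc 0 c))
    (hhδ : ∀ u ∈ Ioc 0 δ, ∫⁻ s in Ioc 0 u, ‖h s‖ₑ ≤ ENNReal.ofReal (ε * u)) :
    ∫⁻ s in Ioc 0 c, ‖h s * s ^ (-α)‖ₑ ≤
      ENNReal.ofReal (ε * (δ ^ (1 - α) / (1 - α)) + δ ^ (-α) * ∫ s in Ioc 0 c, ‖h s‖) := by
  rw [ENNReal.ofReal_add (mul_nonneg hε (div_nonneg (Real.rpow_nonneg hδ.le _) (by linarith)))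
    (mul_nonneg (Real.rpow_nonneg hδ.le _) (integral_nonneg fun _ => norm_nonneg _)),
    ENNReal.ofReal_mul (Real.rpow_nonneg hδ.le _), ofReal_integral_norm_eq_lintegral_enorm hh]
  refine le_trans (le_of_eq ?_) (lintegral_Ioc_mul_ofReal_rpow_neg_le_add hα₀ hα₁ hδ hδc
    hh.aestronglyMeasurable.enorm hhδ)
  refine setLIntegral_congr_fun measurableSet_Ioc fun s hs => ?_
  rw [enorm_mul, Real.enorm_of_nonneg (Real.rpow_nonneg hs.1.le _)]

theorem norm_integral_mul_rpow_neg_le {h : ℝ → ℝ} {α c δ ε : ℝ} (hα₀ : 0 < α)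
    (hα₁ : α < 1) (hδ : 0 < δ) (hδc : δ ≤ c) (hε : 0 ≤ ε) (hh : IntegrableOn h (Ioc 0 c))
    (hhδ : ∀ u ∈ Ioc 0 δ, ∫⁻ s in Ioc 0 u, ‖h s‖ₑ ≤ ENNReal.ofReal (ε * u)) :
    ‖∫ s in Ioc 0 c, h s * s ^ (-α)‖ ≤
      ε * (δ ^ (1 - α) / (1 - α)) + δ ^ (-α) * ∫ s in Ioc 0 c, ‖h s‖ :=
  (norm_integral_le_lintegral_norm _).trans <| ENNReal.toReal_le_of_le_ofReal
    (add_nonneg (mul_nonneg hε (div_nonneg (Real.rpow_nonneg hδ.le _) (by linarith)))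
      (mul_nonneg (Real.rpow_nonneg hδ.le _) (integral_nonneg fun _ => norm_nonneg _)))
    ((lintegral_congr fun _ => ofReal_norm _).trans_le
      (lintegral_Ioc_enorm_mul_rpow_neg_le hα₀ hα₁ hδ hδc hε hh hhδ))

theorem exists_forall_Ioc_le_ofReal_mul_of_tendsto_div {Φ : ℝ → ℝ≥0∞}
    (hΦ : Tendsto (fun u => Φ u / ENNReal.ofReal u) (𝓝[>] 0) (𝓝 0)) {ε c : ℝ} (hε : 0 < ε)
    (hc : 0 < c) : ∃ δ, 0 < δ ∧ δ ≤ c ∧ ∀ u ∈ Ioc 0 δ, Φ u ≤ ENNReal.ofReal (ε * u) := by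
  have hev : ∀ᶠ u in 𝓝[>] 0, Φ u ≤ ENNReal.ofReal (ε * u) := by
    filter_upwards [hΦ.eventually (ge_mem_nhds (ENNReal.ofReal_pos.2 hε)), self_mem_nhdsWithin]
      with u hu (hu₀ : 0 < u)
    rwa [ENNReal.div_le_iff (by simpa using hu₀) ENNReal.ofReal_ne_top,
      ← ENNReal.ofReal_mul hε.le] at hu
  obtain ⟨δ, hδ, hδΦ⟩ := mem_nhdsGT_iff_exists_Ioc_subset.1 hev
  exact ⟨min δ c, lt_min hδ hc, min_le_right _ _,
    fun u hu => hδΦ ⟨hu.1, hu.2.trans (min_le_left _ _)⟩⟩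

theorem integrableOn_mul_rpow_neg_of_tendsto {h : ℝ → ℝ} {α c : ℝ} (hα₀ : 0 < α)
    (hα₁ : α < 1) (hc : 0 < c) (hh : IntegrableOn h (Ioc 0 c))
    (h0 : Tendsto (fun u => (∫⁻ s in Ioc 0 u, ‖h s‖ₑ) / ENNReal.ofReal u) (𝓝[>] 0) (𝓝 0)) :
    IntegrableOn (fun s => h s * s ^ (-α)) (Ioc 0 c) := by
  obtain ⟨δ, hδ, hδc, hhδ⟩ := exists_forall_Ioc_le_ofReal_mul_of_tendsto_div h0 one_pos hc
  refine ⟨hh.aestronglyMeasurable.mul ?_, (lintegral_Ioc_enorm_mul_rpow_neg_le hα₀ hα₁ hδ hδc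
    zero_le_one hh hhδ).trans_lt ENNReal.ofReal_lt_top⟩
  exact (continuousOn_id.rpow_const fun s hs => Or.inl hs.1.ne').aestronglyMeasurable
    measurableSet_Ioc

theorem one_div_Gamma_one_sub {α : ℝ} (hα : α < 1) :
    1 / Real.Gamma (1 - α) = (1 - α) / Real.Gamma (2 - α) := by
  rw [show 2 - α = (1 - α) + 1 by ring, Real.Gamma_add_one (sub_ne_zero.2 hα.ne'),
    div_mul_cancel_left₀ (sub_ne_zero.2 hα.ne'), one_div]

theorem continuousAt_Gamma_two_sub : ContinuousAt (fun α : ℝ => Real.Gamma (2 - α)) 1 := by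
  refine ContinuousAt.comp (g := Real.Gamma) ?_ (by fun_prop)
  norm_num
  exact (Real.differentiableAt_Gamma fun m => by linarith [m.cast_nonneg (α := ℝ)]).continuousAt

theorem one_div_Gamma_mul_integral_mul_rpow_neg_eq {g : ℝ → ℝ} {α c L : ℝ} (hα : α < 1)
    (hc : 0 ≤ c) (hint : IntegrableOn (fun s => (g s - L) * s ^ (-α)) (Ioc 0 c)) :
    1 / Real.Gamma (1 - α) * ∫ s in Ioc 0 c, g s * s ^ (-α) =
      L * c ^ (1 - α) / Real.Gamma (2 - α) +
        (1 - α) / Real.Gamma (2 - α) * ∫ s in Ioc 0 c, (g s - L) * s ^ (-α) := by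
  have hkernel : IntegrableOn (fun s : ℝ => s ^ (-α)) (Ioc 0 c) :=
    (intervalIntegrable_iff_integrableOn_Ioc_of_le hc).1
      (intervalIntegral.intervalIntegrable_rpow' (by linarith))
  have hsplit : ∫ s in Ioc 0 c, g s * s ^ (-α) =
      (∫ s in Ioc 0 c, (g s - L) * s ^ (-α)) + L * (c ^ (1 - α) / (1 - α)) := by
    rw [← integral_rpow_neg hα, intervalIntegral.integral_of_le hc,
      ← integral_const_mul, ← integral_add hint (hkernel.const_mul L)]
    congr 1; ext s; ring
  have hα' : 1 - α ≠ 0 := sub_ne_zero.2 hα.ne'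
  rw [hsplit, one_div_Gamma_one_sub hα]
  field_simp
  ring

theorem tendsto_mul_rpow_one_sub_div_Gamma_two_sub {c : ℝ} (hc : 0 < c) (L : ℝ) :
    Tendsto (fun α => L * c ^ (1 - α) / Real.Gamma (2 - α)) (𝓝[<] 1) (𝓝 L) := by
  have := continuousAt_Gamma_two_sub
  have : Real.Gamma (2 - 1) ≠ 0 := by norm_num
  have : ContinuousAt (fun α : ℝ => c ^ (1 - α)) 1 :=
    (Real.continuousAt_const_rpow hc.ne').comp (by fun_prop)
  have hcont : ContinuousAt (fun α => L * c ^ (1 - α) / Real.Gamma (2 - α)) 1 := by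
    fun_prop (disch := assumption)
  convert hcont.tendsto.mono_left nhdsWithin_le_nhds using 2
  norm_num

theorem tendsto_one_sub_div_Gamma_mul_integral_mul_rpow_neg {h : ℝ → ℝ} {c : ℝ} (hc : 0 < c)
    (hh : IntegrableOn h (Ioc 0 c))
    (h0 : Tendsto (fun u => (∫⁻ s in Ioc 0 u, ‖h s‖ₑ) / ENNReal.ofReal u) (𝓝[>] 0) (𝓝 0)) :
    Tendsto (fun α => (1 - α) / Real.Gamma (2 - α) * ∫ s in Ioc 0 c, h s * s ^ (-α))
      (𝓝[<] 1) (𝓝 0) := by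
  rw [Metric.tendsto_nhds]
  intro ε hε
  obtain ⟨δ, hδ, hδc, hhδ⟩ := exists_forall_Ioc_le_ofReal_mul_of_tendsto_div h0 (half_pos hε) hc
  set K := ∫ s in Ioc 0 c, ‖h s‖
  set B : ℝ → ℝ := fun α => (ε / 2 * δ ^ (1 - α) + (1 - α) * δ ^ (-α) * K) / Real.Gamma (2 - α)
  have hB : Tendsto B (𝓝[<] 1) (𝓝 (ε / 2)) := by
    have := continuousAt_Gamma_two_sub
    have : Real.Gamma (2 - 1) ≠ 0 := by norm_num
    have : ContinuousAt (fun α : ℝ => δ ^ (1 - α)) 1 :=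
      (Real.continuousAt_const_rpow hδ.ne').comp (by fun_prop)
    have : ContinuousAt (fun α : ℝ => δ ^ (-α)) 1 :=
      (Real.continuousAt_const_rpow hδ.ne').comp (by fun_prop)
    have hcont : ContinuousAt B 1 := by fun_prop (disch := assumption)
    convert hcont.tendsto.mono_left nhdsWithin_le_nhds using 2
    norm_num [B]
  filter_upwards [hB.eventually_lt_const (half_lt_self hε), Ioo_mem_nhdsLT zero_lt_one]
    with α hBα ⟨hα₀, hα₁⟩
  have hΓ : 0 < Real.Gamma (2 - α) := Real.Gamma_pos_of_pos (by linarith)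
  have hα : 0 < 1 - α := sub_pos.2 hα₁
  rw [dist_zero_right, norm_mul, Real.norm_of_nonneg (div_pos hα hΓ).le]
  calc (1 - α) / Real.Gamma (2 - α) * ‖∫ s in Ioc 0 c, h s * s ^ (-α)‖
      ≤ (1 - α) / Real.Gamma (2 - α) * (ε / 2 * (δ ^ (1 - α) / (1 - α)) + δ ^ (-α) * K) := by
        gcongr
        exact norm_integral_mul_rpow_neg_le hα₀ hα₁ hδ hδc (half_pos hε).le hh hhδ
    _ = B α := by
        simp only [B]
        field_simp
    _ < ε := hBα

theorem tendsto_one_div_Gamma_mul_integral_mul_rpow_neg {g : ℝ → ℝ} {c L : ℝ} (hc : 0 < c)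
    (hg : IntegrableOn g (Ioc 0 c))
    (hL : Tendsto (fun u => (∫⁻ s in Ioc 0 u, ‖g s - L‖ₑ) / ENNReal.ofReal u) (𝓝[>] 0) (𝓝 0)) :
    Tendsto (fun α => 1 / Real.Gamma (1 - α) * ∫ s in Ioc 0 c, g s * s ^ (-α))
      (𝓝[<] 1) (𝓝 L) := by
  have hgL : IntegrableOn (fun s => g s - L) (Ioc 0 c) :=
    hg.sub (integrableOn_const measure_Ioc_lt_top.ne)
  have hlim := (tendsto_mul_rpow_one_sub_div_Gamma_two_sub hc L).add
    (tendsto_one_sub_div_Gamma_mul_integral_mul_rpow_neg hc hgL hL)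
  rw [add_zero] at hlim
  refine hlim.congr' ?_
  filter_upwards [Ioo_mem_nhdsLT zero_lt_one] with α ⟨hα₀, hα₁⟩
  exact (one_div_Gamma_mul_integral_mul_rpow_neg_eq hα₁ hc.le
    (integrableOn_mul_rpow_neg_of_tendsto hα₀ hα₁ hc hgL hL)).symm

theorem ae_tendsto_lintegral_Ioc_enorm_sub_div {f : ℝ → ℝ} (hf : LocallyIntegrable f) :
    ∀ᵐ t, Tendsto (fun u => (∫⁻ s in Ioc 0 u, ‖f (t - s) - f t‖ₑ) / ENNReal.ofReal u)
      (𝓝[>] 0) (𝓝 0) := by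
  filter_upwards
    [(IsUnifLocDoublingMeasure.vitaliFamily volume 1).ae_tendsto_lintegral_enorm_sub_div hf]
    with t ht
  have hballs : Tendsto (fun u : ℝ => Metric.closedBall (t - u / 2) (u / 2)) (𝓝[>] 0)
      ((IsUnifLocDoublingMeasure.vitaliFamily volume 1).filterAt t) := by
    refine IsUnifLocDoublingMeasure.tendsto_closedBall_filterAt volume _ _
      (tendsto_nhdsWithin_iff.2
        ⟨?_, eventually_nhdsWithin_of_forall fun u (hu : 0 < u) => half_pos hu⟩)
      (eventually_nhdsWithin_of_forall fun u (hu : 0 < u) => by simp [abs_of_pos hu])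
    simpa using (tendsto_id.mono_left (nhdsWithin_le_nhds (a := (0 : ℝ)))).div_const (2 : ℝ)
  refine tendsto_of_tendsto_of_tendsto_of_le_of_le' tendsto_const_nhds (ht.comp hballs)
    (Eventually.of_forall fun _ => zero_le) ?_
  filter_upwards [self_mem_nhdsWithin] with u (hu : 0 < u)
  have hIcc : Metric.closedBall (t - u / 2) (u / 2) = Icc (t - u) t := by
    rw [Real.closedBall_eq_Icc]; congr 1 <;> ring
  simp only [Function.comp_apply, hIcc, Real.volume_Icc, sub_sub_cancel]
  gcongr ?_ / _
  calc ∫⁻ s in Ioc 0 u, ‖f (t - s) - f t‖ₑ = ∫⁻ τ in Ico (t - u) t, ‖f τ - f t‖ₑ := by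
        rw [(Measure.measurePreserving_sub_left volume t).setLIntegral_comp_emb
          (MeasurableEquiv.subLeft t).measurableEmbedding (fun τ => ‖f τ - f t‖ₑ)]
        simp
    _ ≤ ∫⁻ τ in Icc (t - u) t, ‖f τ - f t‖ₑ := lintegral_mono_set Ico_subset_Icc_self

theorem ae_restrict_tendsto_lintegral_Ioc_enorm_sub_div {f : ℝ → ℝ} {U : Set ℝ}
    (hU : IsOpen U) (hf : IntegrableOn f U) :
    ∀ᵐ t ∂volume.restrict U,
      Tendsto (fun u => (∫⁻ s in Ioc 0 u, ‖f (t - s) - f t‖ₑ) / ENNReal.ofReal u)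
        (𝓝[>] 0) (𝓝 0) := by
  filter_upwards [ae_restrict_of_ae (ae_tendsto_lintegral_Ioc_enorm_sub_div
    (hf.integrable_indicator hU.measurableSet).locallyIntegrable),
    ae_restrict_mem hU.measurableSet] with t ht htU
  obtain ⟨r, hr, hball⟩ := Metric.isOpen_iff.1 hU t htU
  refine ht.congr' ?_
  filter_upwards [Ioo_mem_nhdsGT hr] with u hu
  congr 1
  refine setLIntegral_congr_fun measurableSet_Ioc fun s hs => ?_
  have hts : t - s ∈ U := hball (by
    rw [Metric.mem_ball, Real.dist_eq, sub_sub_cancel_left, abs_neg, abs_of_pos hs.1]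
    exact hs.2.trans_lt hu.2)
  rw [indicator_of_mem htU, indicator_of_mem hts]

theorem caputoD_eq_integral_Ioc {a t : ℝ} (hat : a ≤ t) (α : ℝ) (f : ℝ → ℝ) :
    caputoD a α f t = 1 / Real.Gamma (1 - α) * ∫ s in Ioc 0 (t - a), f (t - s) * s ^ (-α) := by
  rw [caputoD, ← intervalIntegral.integral_of_le (sub_nonneg.2 hat), ← sub_self t,
    ← intervalIntegral.integral_comp_sub_left]
  simp only [sub_sub_cancel]

theorem caputo_ae_tendsto_general (a b : ℝ) (f' : ℝ → ℝ)
    (hf' : IntegrableOn f' (Set.Ioo a b)) :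
    ∀ᵐ t ∂(volume.restrict (Set.Ioo a b)),
      Tendsto (fun α => caputoD a α f' t) (nhdsWithin 1 (Set.Iio 1)) (nhds (f' t)) := by
  filter_upwards [ae_restrict_tendsto_lintegral_Ioc_enorm_sub_div isOpen_Ioo hf',
    ae_restrict_mem measurableSet_Ioo] with t hleb ⟨hat, htb⟩
  have hint : IntegrableOn (fun s => f' (t - s)) (Ioc 0 (t - a)) := by
    have := (((intervalIntegrable_iff_integrableOn_Ioc_of_le hat.le).2
      (hf'.mono_set (Ioc_subset_Ioo_right htb))).comp_sub_left t).symm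
    rwa [sub_self, intervalIntegrable_iff_integrableOn_Ioc_of_le (sub_nonneg.2 hat.le)] at this
  simp_rw [caputoD_eq_integral_Ioc hat.le]
  exact tendsto_one_div_Gamma_mul_integral_mul_rpow_neg (sub_pos.2 hat) hint hleb

/-- For `f ∈ W^{1,1}(a,b)`, `ᶜ_aDᵅf(t) → f'(t)` as `α → 1⁻`, a.e. in `(a,b)`. -/
theorem caputo_ae_tendsto (a b : ℝ) (hab : a < b) (f f' : ℝ → ℝ)
    (hf' : IntegrableOn f' (Set.Ioo a b))
    (hf : ∀ t ∈ Set.Icc a b, f t = f a + ∫ τ in a..t, f' τ) :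
    ∀ᵐ t ∂(volume.restrict (Set.Ioo a b)),
      Tendsto (fun α => caputoD a α f' t) (nhdsWithin 1 (Set.Iio 1)) (nhds (f' t)) :=
  caputo_ae_tendsto_general a b f' hf'
end

section
/- Let -∞ < a < b < ∞ and let f belong to W^{1,1}(a,b). Then lim_{α→1⁻} ∫_a^b |ᶜᶠ_aDᵅf(t) − f'(t)| dt = 0, i.e. the Caputo–Fabrizio fractional derivative of order α converges to the ordinary derivative in the L¹(a,b) norm as α increases to 1. -/
/-!
Extending the Caputo–Fabrizio kernel by zero to the negative half-line, `cfD a α f'` agrees on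
`(a, b)` with the convolution of `f' · 1_(a,b)` with
`k_α(s) = (1 - α)⁻¹ exp (-α s / (1 - α)) 1_{s ≥ 0}`, a nonnegative kernel of mass `α⁻¹` that
concentrates at `0` as `α → 1⁻`. Convolution with `k_α` has norm `α⁻¹ ≤ 2` on `L¹`, so by density
it suffices to treat a continuous compactly supported `φ`. The substitution `s = (1 - α) u / α`
gives `(φ ⋆ k_α)(t) = α⁻¹ ∫₀^∞ e^{-u} φ(t - (1 - α) u / α) du`, which tends to `φ t` boundedly,
and dominated convergence on the bounded interval concludes.
-/

open MeasureTheory Filter Set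

open scoped Convolution Topology

namespace CaputoFabrizio

lemma integral_abs_convolution_sub_le {F H k : ℝ → ℝ} (hF : Integrable F) (hH : Integrable H)
    (hk : Integrable k) (hk0 : ∀ s, 0 ≤ k s) :
    ∫ t, |(F ⋆ k) t - (H ⋆ k) t| ≤ (∫ t, |F t - H t|) * ∫ s, k s := by
  have hFH : Integrable fun t => |F t - H t| := (hF.sub hH).abs
  have hpt : ∀ᵐ t, |(F ⋆ k) t - (H ⋆ k) t| ≤ ((fun t => |F t - H t|) ⋆ k) t := by
    filter_upwards [hF.ae_convolution_exists (ContinuousLinearMap.lsmul ℝ ℝ) hk,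
      hH.ae_convolution_exists (ContinuousLinearMap.lsmul ℝ ℝ) hk] with t hFt hHt
    have hFt' : Integrable fun τ => F τ • k (t - τ) := hFt
    have hHt' : Integrable fun τ => H τ • k (t - τ) := hHt
    rw [convolution_lsmul, convolution_lsmul, convolution_lsmul, ← integral_sub hFt' hHt',
      ← Real.norm_eq_abs]
    refine (norm_integral_le_integral_norm _).trans_eq (integral_congr_ae ?_)
    refine Eventually.of_forall fun τ => ?_
    simp only [smul_eq_mul, ← sub_mul, norm_mul, Real.norm_eq_abs, abs_of_nonneg (hk0 _)]
  calc ∫ t, |(F ⋆ k) t - (H ⋆ k) t|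
      ≤ ∫ t, ((fun t => |F t - H t|) ⋆ k) t :=
        integral_mono_of_nonneg (Eventually.of_forall fun t => abs_nonneg _)
          (hFH.integrable_convolution _ hk) hpt
    _ = (∫ t, |F t - H t|) * ∫ s, k s := integral_convolution _ hFH hk

noncomputable def kernel (α : ℝ) : ℝ → ℝ :=
  (Ici 0).indicator fun s => 1 / (1 - α) * Real.exp (-(α / (1 - α)) * s)

variable {α : ℝ}

lemma kernel_nonneg (hα : α < 1) (s : ℝ) : 0 ≤ kernel α s := by
  have : 0 < 1 - α := by linarith
  exact indicator_nonneg (fun s _ => by positivity) s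

lemma integrable_kernel (h0 : 0 < α) (h1 : α < 1) : Integrable (kernel α) := by
  have : 0 < 1 - α := by linarith
  rw [kernel, integrable_indicator_iff measurableSet_Ici, integrableOn_Ici_iff_integrableOn_Ioi]
  exact (exp_neg_integrableOn_Ioi 0 (by positivity)).const_mul _

lemma convolution_kernel_eq (φ : ℝ → ℝ) (h0 : 0 < α) (h1 : α < 1) (t : ℝ) :
    (φ ⋆ kernel α) t = α⁻¹ * ∫ u in Ioi 0, Real.exp (-u) * φ (t - (1 - α) / α * u) := by
  have h1' : 0 < 1 - α := by linarith
  have hc : 0 < (1 - α) / α := by positivity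
  have hsub := integral_comp_mul_left_Ioi'
    (fun τ => φ (t - τ) * (1 / (1 - α) * Real.exp (-(α / (1 - α)) * τ))) 0 hc
  rw [mul_zero] at hsub
  have hind : (fun τ => φ (t - τ) • kernel α τ) = (Ici 0).indicator
      fun τ => φ (t - τ) * (1 / (1 - α) * Real.exp (-(α / (1 - α)) * τ)) := by
    funext τ
    exact (indicator_mul_right (Ici 0) (fun τ => φ (t - τ)) _).symm
  rw [convolution_lsmul_swap, hind, integral_indicator measurableSet_Ici,
    integral_Ici_eq_integral_Ioi, ← hsub, smul_eq_mul, ← integral_const_mul, ← integral_const_mul]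
  refine integral_congr_ae (Eventually.of_forall fun u => ?_)
  have : -(α / (1 - α)) * ((1 - α) / α * u) = -u := by field_simp
  simp only [this]
  field_simp

lemma integral_kernel (h0 : 0 < α) (h1 : α < 1) : ∫ s, kernel α s = α⁻¹ := by
  have h := convolution_kernel_eq (fun _ => 1) h0 h1 0
  rw [convolution_lsmul_swap] at h
  simpa only [smul_eq_mul, one_mul, mul_one, integral_exp_neg_Ioi_zero] using h

lemma abs_convolution_kernel_le {φ : ℝ → ℝ} {M : ℝ} (hM : ∀ x, |φ x| ≤ M) (h0 : 0 < α)
    (h1 : α < 1) (t : ℝ) : |(φ ⋆ kernel α) t| ≤ α⁻¹ * M := by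
  rw [convolution_kernel_eq φ h0 h1, abs_mul, abs_of_pos (inv_pos.2 h0)]
  gcongr
  calc ‖∫ u in Ioi 0, Real.exp (-u) * φ (t - (1 - α) / α * u)‖
      ≤ ∫ u in Ioi 0, Real.exp (-u) * M := by
        refine norm_integral_le_of_norm_le ((integrableOn_exp_neg_Ioi 0).mul_const M)
          (Eventually.of_forall fun u => ?_)
        rw [norm_mul, Real.norm_of_nonneg (Real.exp_pos _).le, Real.norm_eq_abs]
        gcongr
        exact hM _
    _ = M := by rw [integral_mul_const, integral_exp_neg_Ioi_zero, one_mul]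

lemma tendsto_convolution_kernel {φ : ℝ → ℝ} {M : ℝ} (hφ : Continuous φ) (hM : ∀ x, |φ x| ≤ M)
    (t : ℝ) : Tendsto (fun α => (φ ⋆ kernel α) t) (𝓝[<] 1) (𝓝 (φ t)) := by
  have hscale : Tendsto (fun α : ℝ => (1 - α) / α) (𝓝[<] 1) (𝓝 0) := by
    have : ContinuousAt (fun α : ℝ => (1 - α) / α) 1 := by fun_prop (disch := norm_num)
    simpa using this.tendsto.mono_left nhdsWithin_le_nhds
  have hinv : Tendsto (fun α : ℝ => α⁻¹) (𝓝[<] 1) (𝓝 1) := by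
    simpa using (continuousAt_inv₀ (one_ne_zero (α := ℝ))).tendsto.mono_left nhdsWithin_le_nhds
  have hmean : Tendsto (fun α => ∫ u in Ioi 0, Real.exp (-u) * φ (t - (1 - α) / α * u))
      (𝓝[<] 1) (𝓝 (∫ u in Ioi 0, Real.exp (-u) * φ t)) := by
    refine tendsto_integral_filter_of_dominated_convergence (fun u => Real.exp (-u) * M)
      (Eventually.of_forall fun α => (by fun_prop : Continuous _).aestronglyMeasurable) ?_
      ((integrableOn_exp_neg_Ioi 0).mul_const M) (Eventually.of_forall fun u => ?_)
    · refine Eventually.of_forall fun α => Eventually.of_forall fun u => ?_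
      rw [norm_mul, Real.norm_of_nonneg (Real.exp_pos _).le, Real.norm_eq_abs]
      gcongr
      exact hM _
    · have : Tendsto (fun α => t - (1 - α) / α * u) (𝓝[<] 1) (𝓝 t) := by
        simpa using tendsto_const_nhds.sub (hscale.mul_const u)
      exact tendsto_const_nhds.mul ((hφ.tendsto t).comp this)
  rw [integral_mul_const, integral_exp_neg_Ioi_zero, one_mul] at hmean
  have hlim := hinv.mul hmean
  rw [one_mul] at hlim
  refine hlim.congr' ?_
  filter_upwards [Ioo_mem_nhdsLT zero_lt_one] with α hα
  exact (convolution_kernel_eq φ hα.1 hα.2 t).symm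

lemma tendsto_setIntegral_abs_convolution_kernel_sub_of_hasCompactSupport {φ : ℝ → ℝ}
    (hφ : Continuous φ) (hφc : HasCompactSupport φ) {s : Set ℝ} (hs : volume s ≠ ⊤) :
    Tendsto (fun α => ∫ t in s, |(φ ⋆ kernel α) t - φ t|) (𝓝[<] 1) (𝓝 0) := by
  obtain ⟨M, hM⟩ := hφc.exists_bound_of_continuous hφ
  simp only [Real.norm_eq_abs] at hM
  have hα : ∀ᶠ α in 𝓝[<] (1 : ℝ), α ∈ Ioo (1 / 2) 1 := Ioo_mem_nhdsLT (by norm_num)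
  have hmeas : ∀ᶠ α in 𝓝[<] (1 : ℝ),
      AEStronglyMeasurable (fun t => |(φ ⋆ kernel α) t - φ t|) (volume.restrict s) := by
    filter_upwards [hα] with α hα
    have hconv := hφc.continuous_convolution_left (ContinuousLinearMap.lsmul ℝ ℝ) hφ
      (integrable_kernel (by linarith [hα.1]) hα.2).locallyIntegrable
    exact (by fun_prop : Continuous _).aestronglyMeasurable
  have hbound : ∀ᶠ α in 𝓝[<] (1 : ℝ), ∀ᵐ t ∂volume.restrict s,
      ‖|(φ ⋆ kernel α) t - φ t|‖ ≤ 2 * M + M := by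
    filter_upwards [hα] with α hα
    refine Eventually.of_forall fun t => ?_
    have h0 : 0 < α := by linarith [hα.1]
    have hinv : α⁻¹ ≤ 2 := by rw [inv_le_comm₀ h0 two_pos]; linarith [hα.1]
    have hM0 : 0 ≤ M := (abs_nonneg _).trans (hM 0)
    rw [Real.norm_eq_abs, abs_abs]
    calc |(φ ⋆ kernel α) t - φ t| ≤ |(φ ⋆ kernel α) t| + |φ t| := abs_sub _ _
      _ ≤ α⁻¹ * M + M := add_le_add (abs_convolution_kernel_le hM h0 hα.2 t) (hM t)
      _ ≤ 2 * M + M := by gcongr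
  have hlim : ∀ᵐ t ∂volume.restrict s,
      Tendsto (fun α => |(φ ⋆ kernel α) t - φ t|) (𝓝[<] 1) (𝓝 0) :=
    Eventually.of_forall fun t => by
      simpa using ((tendsto_convolution_kernel hφ hM t).sub_const (φ t)).abs
  simpa using tendsto_integral_filter_of_dominated_convergence _ hmeas hbound
    (integrableOn_const hs) hlim

lemma tendsto_setIntegral_abs_convolution_kernel_sub {G : ℝ → ℝ} (hG : Integrable G)
    {s : Set ℝ} (hs : volume s ≠ ⊤) :
    Tendsto (fun α => ∫ t in s, |(G ⋆ kernel α) t - G t|) (𝓝[<] 1) (𝓝 0) := by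
  rw [Metric.tendsto_nhds]
  intro ε hε
  obtain ⟨φ, hφc, hGφ, hφ, hφi⟩ := hG.exists_hasCompactSupport_integral_sub_le (ε := ε / 4)
    (by positivity)
  simp only [Real.norm_eq_abs] at hGφ
  filter_upwards [(tendsto_setIntegral_abs_convolution_kernel_sub_of_hasCompactSupport hφ hφc
    hs).eventually_lt_const (by positivity : (0 : ℝ) < ε / 4),
    Ioo_mem_nhdsLT (by norm_num : (1 / 2 : ℝ) < 1)] with α hφα hα
  have h0 : 0 < α := by linarith [hα.1]
  have hk := integrable_kernel h0 hα.2
  set A := fun t => |(G ⋆ kernel α) t - (φ ⋆ kernel α) t|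
  set B := fun t => |(φ ⋆ kernel α) t - φ t|
  set C := fun t => |G t - φ t|
  have hA : Integrable A :=
    ((hG.integrable_convolution _ hk).sub (hφi.integrable_convolution _ hk)).abs
  have hB : Integrable B := ((hφi.integrable_convolution _ hk).sub hφi).abs
  have hC : Integrable C := (hG.sub hφi).abs
  have hAB : Integrable fun t => A t + B t := hA.add hB
  have hAε : ∫ t, A t ≤ ε / 2 := by
    have hinv : α⁻¹ ≤ 2 := by rw [inv_le_comm₀ h0 two_pos]; linarith [hα.1]
    calc ∫ t, A t ≤ (∫ t, C t) * α⁻¹ := by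
          simpa only [integral_kernel h0 hα.2] using
            integral_abs_convolution_sub_le hG hφi hk (kernel_nonneg hα.2)
      _ ≤ (ε / 4) * 2 := by gcongr
      _ = ε / 2 := by ring
  rw [Real.dist_eq, sub_zero, abs_of_nonneg (integral_nonneg fun t => abs_nonneg _)]
  calc ∫ t in s, |(G ⋆ kernel α) t - G t|
      ≤ ∫ t in s, (A t + B t + C t) := by
        refine integral_mono_of_nonneg (Eventually.of_forall fun t => abs_nonneg _)
          (hAB.add hC).integrableOn (Eventually.of_forall fun t => ?_)
        simp only [A, B, C]
        calc |(G ⋆ kernel α) t - G t| = |((G ⋆ kernel α) t - (φ ⋆ kernel α) t)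
              + ((φ ⋆ kernel α) t - φ t) + (φ t - G t)| := by congr 1; ring
          _ ≤ _ := abs_add_three _ _ _
          _ = _ := by rw [abs_sub_comm (φ t)]
    _ = (∫ t in s, A t) + (∫ t in s, B t) + ∫ t in s, C t := by
        rw [integral_add hAB.integrableOn hC.integrableOn,
          integral_add hA.integrableOn hB.integrableOn]
    _ ≤ (∫ t, A t) + (∫ t in s, B t) + ∫ t, C t := by
        have hAs := setIntegral_le_integral (s := s) hA
          (Eventually.of_forall fun t => abs_nonneg _)
        have hCs := setIntegral_le_integral (s := s) hC
          (Eventually.of_forall fun t => abs_nonneg _)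
        linarith
    _ < ε := by linarith

lemma cfD_eq_convolution_indicator {a b α t : ℝ} (f' : ℝ → ℝ) (ht : t ∈ Ico a b) :
    cfD a α f' t = ((Ioo a b).indicator f' ⋆ kernel α) t := by
  rw [cfD, intervalIntegral.integral_of_le ht.1, ← integral_const_mul,
    ← integral_indicator measurableSet_Ioc, convolution_lsmul]
  refine integral_congr_ae (Eventually.of_forall fun τ => ?_)
  dsimp only
  by_cases hτ : τ ∈ Ioc a t
  · have hτb : τ ∈ Ioo a b := ⟨hτ.1, hτ.2.trans_lt ht.2⟩
    have hτt : t - τ ∈ Ici 0 := sub_nonneg.2 hτ.2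
    simp only [indicator_of_mem hτ, indicator_of_mem hτb, kernel, indicator_of_mem hτt,
      smul_eq_mul]
    ring
  · rw [indicator_of_notMem hτ]
    rcases not_and_or.1 hτ with hτa | hτt
    · rw [indicator_of_notMem fun h : τ ∈ Ioo a b => hτa h.1, zero_smul]
    · have : t - τ ∉ Ici 0 := by simp only [mem_Ici, sub_nonneg]; exact hτt
      rw [kernel, indicator_of_notMem this, smul_zero]

end CaputoFabrizio

theorem cf_L1_tendsto_general (a b : ℝ) (f' : ℝ → ℝ)
    (hf' : IntegrableOn f' (Set.Ioo a b)) :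
    Tendsto (fun α => ∫ t in Set.Ioo a b, |cfD a α f' t - f' t|)
      (nhdsWithin 1 (Set.Iio 1)) (nhds 0) := by
  have hG : Integrable ((Ioo a b).indicator f') :=
    (integrable_indicator_iff measurableSet_Ioo).2 hf'
  refine (CaputoFabrizio.tendsto_setIntegral_abs_convolution_kernel_sub hG
    measure_Ioo_lt_top.ne).congr fun α => setIntegral_congr_fun measurableSet_Ioo fun t ht => ?_
  rw [CaputoFabrizio.cfD_eq_convolution_indicator f' (Ioo_subset_Ico_self ht),
    indicator_of_mem ht]

/-- For `f ∈ W^{1,1}(a,b)`, `‖ᶜᶠ_aDᵅf - f'‖_{L¹(a,b)} → 0` as `α → 1⁻`. -/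
theorem cf_L1_tendsto (a b : ℝ) (hab : a < b) (f f' : ℝ → ℝ)
    (hf' : IntegrableOn f' (Set.Ioo a b))
    (hf : ∀ t ∈ Set.Icc a b, f t = f a + ∫ τ in a..t, f' τ) :
    Tendsto (fun α => ∫ t in Set.Ioo a b, |cfD a α f' t - f' t|)
      (nhdsWithin 1 (Set.Iio 1)) (nhds 0) :=
  cf_L1_tendsto_general a b f' hf'
end

section
/- Let -∞ < a < b < ∞ and let f be twice continuously differentiable on [a,b]. Then for every t ∈ (a,b], lim_{α→1⁻} ᶜᶠ_aDᵅf(t) = f'(t), i.e. the Caputo–Fabrizio fractional derivative of f of order α converges pointwise on (a,b] to the ordinary derivative as α increases to 1. -/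
open MeasureTheory Filter Set

/-! With `k = α / (1 - α) → ∞`, the kernel `e^{-k (t - τ)} / (1 - α)` has mass
`(1 - e^{-k (t - a)}) / α → 1` on `[a, t]` and concentrates at `τ = t`. Split
`f' τ = f' t + (f' τ - f' t)`: the constant part tends to `f' t`. By the mean value theorem `f'` is
`M`-Lipschitz on `[a, b]` with `M = sup |f''|`, so the rest is at most
`M / (1 - α) * ∫ (t - τ) e^{-k (t - τ)} dτ ≤ M / ((1 - α) k²) = M (1 - α) / α² → 0`. -/

open Topology NNReal

theorem integral_exp_neg_mul_sub (a t : ℝ) {k : ℝ} (hk : k ≠ 0) :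
    ∫ τ in a..t, Real.exp (-k * (t - τ)) = (1 - Real.exp (-k * (t - a))) / k := by
  have hderiv : ∀ τ ∈ uIcc a t,
      HasDerivAt (fun τ => Real.exp (-k * (t - τ)) / k) (Real.exp (-k * (t - τ))) τ := by
    intro τ _
    have := ((((hasDerivAt_id' τ).const_sub t).const_mul (-k)).exp).div_const k
    simpa [mul_div_cancel_right₀ _ hk] using this
  rw [intervalIntegral.integral_eq_sub_of_hasDerivAt hderiv
    (Continuous.intervalIntegrable (by fun_prop) a t)]
  simp only [sub_self, mul_zero, Real.exp_zero]
  ring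

theorem integral_sub_mul_exp_neg_mul_sub_le {a t k : ℝ} (hk : 0 < k) (hat : a ≤ t) :
    ∫ τ in a..t, (t - τ) * Real.exp (-k * (t - τ)) ≤ 1 / k ^ 2 := by
  have hderiv : ∀ τ ∈ uIcc a t, HasDerivAt
      (fun τ => ((t - τ) / k + 1 / k ^ 2) * Real.exp (-k * (t - τ)))
      ((t - τ) * Real.exp (-k * (t - τ))) τ := by
    intro τ _
    have hlin := (((hasDerivAt_id' τ).const_sub t).div_const k).add_const (1 / k ^ 2)
    refine (hlin.mul (((hasDerivAt_id' τ).const_sub t).const_mul (-k)).exp).congr_deriv ?_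
    field_simp
    ring
  rw [intervalIntegral.integral_eq_sub_of_hasDerivAt hderiv
    (Continuous.intervalIntegrable (by fun_prop) a t)]
  have hboundary : 0 ≤ ((t - a) / k + 1 / k ^ 2) * Real.exp (-k * (t - a)) := by
    have : 0 ≤ t - a := sub_nonneg.2 hat
    positivity
  simp only [sub_self, mul_zero, zero_div, zero_add, Real.exp_zero, mul_one]
  linarith

theorem tendsto_div_one_sub_nhdsLT_one :
    Tendsto (fun α : ℝ => α / (1 - α)) (𝓝[<] 1) atTop := by
  have hsub : Tendsto (fun α : ℝ => 1 - α) (𝓝[<] 1) (𝓝[>] 0) := by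
    refine tendsto_nhdsWithin_of_tendsto_nhds_of_eventually_within _ ?_ ?_
    · have : Tendsto (fun α : ℝ => 1 - α) (𝓝 1) (𝓝 (1 - 1)) :=
        (continuous_const.sub continuous_id).tendsto 1
      simpa using this.mono_left nhdsWithin_le_nhds
    · filter_upwards [self_mem_nhdsWithin] with α (hα : α < 1)
      simpa using hα
  simpa [div_eq_mul_inv] using (tendsto_id.mono_left nhdsWithin_le_nhds).pos_mul_atTop one_pos
    (tendsto_inv_nhdsGT_zero.comp hsub)

theorem cfD_const (a c t : ℝ) {α : ℝ} (hα : α ∈ Ioo (0 : ℝ) 1) :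
    cfD a α (fun _ => c) t = c * (1 - Real.exp (-(α / (1 - α)) * (t - a))) / α := by
  have h1α : 1 - α ≠ 0 := sub_ne_zero.2 hα.2.ne'
  rw [cfD, intervalIntegral.integral_const_mul,
    integral_exp_neg_mul_sub a t (div_pos hα.1 (sub_pos.2 hα.2)).ne']
  field_simp

theorem tendsto_cfD_const {a t : ℝ} (hat : a < t) (c : ℝ) :
    Tendsto (fun α => cfD a α (fun _ => c) t) (𝓝[<] 1) (𝓝 c) := by
  have hexp : Tendsto (fun α : ℝ => Real.exp (-(α / (1 - α)) * (t - a))) (𝓝[<] 1) (𝓝 0) := by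
    simpa [Function.comp_def, neg_mul] using Real.tendsto_exp_neg_atTop_nhds_zero.comp
      (tendsto_div_one_sub_nhdsLT_one.atTop_mul_const (sub_pos.2 hat))
  have hα : Tendsto (fun α : ℝ => α) (𝓝[<] 1) (𝓝 1) := tendsto_id.mono_left nhdsWithin_le_nhds
  have hlim : Tendsto (fun α : ℝ => c * (1 - Real.exp (-(α / (1 - α)) * (t - a))) / α) (𝓝[<] 1)
      (𝓝 (c * (1 - 0) / 1)) :=
    (tendsto_const_nhds.mul (tendsto_const_nhds.sub hexp)).div hα one_ne_zero
  rw [sub_zero, mul_one, div_one] at hlim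
  refine hlim.congr' ?_
  filter_upwards [Ioo_mem_nhdsLT zero_lt_one] with α hα using (cfD_const a c t hα).symm

theorem cfD_sub {a α t : ℝ} {g h : ℝ → ℝ} (hg : IntervalIntegrable g volume a t)
    (hh : IntervalIntegrable h volume a t) :
    cfD a α (fun τ => g τ - h τ) t = cfD a α g t - cfD a α h t := by
  have hkernel : ContinuousOn (fun τ => Real.exp (-(α / (1 - α)) * (t - τ))) (uIcc a t) := by
    fun_prop
  simp only [cfD, sub_mul]
  rw [intervalIntegral.integral_sub (hg.mul_continuousOn hkernel) (hh.mul_continuousOn hkernel),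
    mul_sub]

theorem abs_cfD_le {a α t M : ℝ} {g : ℝ → ℝ} (hα : α ∈ Ioo (0 : ℝ) 1) (hat : a ≤ t)
    (hM : 0 ≤ M) (hg : ∀ τ ∈ Ioc a t, |g τ| ≤ M * (t - τ)) :
    |cfD a α g t| ≤ M * (1 - α) / α ^ 2 := by
  set k := α / (1 - α)
  have h1α : 0 < 1 - α := sub_pos.2 hα.2
  have hk : 0 < k := div_pos hα.1 h1α
  have hint : |∫ τ in a..t, g τ * Real.exp (-k * (t - τ))| ≤ M / k ^ 2 :=
    calc |∫ τ in a..t, g τ * Real.exp (-k * (t - τ))|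
        ≤ ∫ τ in a..t, M * ((t - τ) * Real.exp (-k * (t - τ))) := by
          rw [← Real.norm_eq_abs]
          refine intervalIntegral.norm_integral_le_of_norm_le hat
            (Eventually.of_forall fun τ hτ => ?_) (Continuous.intervalIntegrable ?_ a t)
          · rw [Real.norm_eq_abs, abs_mul, Real.abs_exp, ← mul_assoc]
            exact mul_le_mul_of_nonneg_right (hg τ hτ) (Real.exp_nonneg _)
          · fun_prop
      _ = M * ∫ τ in a..t, (t - τ) * Real.exp (-k * (t - τ)) :=
          intervalIntegral.integral_const_mul _ _
      _ ≤ M * (1 / k ^ 2) :=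
          mul_le_mul_of_nonneg_left (integral_sub_mul_exp_neg_mul_sub_le hk hat) hM
      _ = M / k ^ 2 := mul_one_div _ _
  calc |cfD a α g t| = (1 / (1 - α)) * |∫ τ in a..t, g τ * Real.exp (-k * (t - τ))| := by
        rw [cfD, abs_mul, abs_of_pos (one_div_pos.2 h1α)]
    _ ≤ (1 / (1 - α)) * (M / k ^ 2) := by gcongr
    _ = M * (1 - α) / α ^ 2 := by
        simp only [k]
        field_simp [hα.1.ne']

theorem tendsto_cfD_zero_of_abs_le {a t M : ℝ} {g : ℝ → ℝ} (hat : a ≤ t) (hM : 0 ≤ M)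
    (hg : ∀ τ ∈ Ioc a t, |g τ| ≤ M * (t - τ)) :
    Tendsto (fun α => cfD a α g t) (𝓝[<] 1) (𝓝 0) := by
  have hbound : Tendsto (fun α : ℝ => M * (1 - α) / α ^ 2) (𝓝[<] 1) (𝓝 0) := by
    have : Tendsto (fun α : ℝ => M * (1 - α) / α ^ 2) (𝓝 1) (𝓝 (M * (1 - 1) / 1 ^ 2)) :=
      ((continuous_const.mul (continuous_const.sub continuous_id)).tendsto 1).div
        ((continuous_pow 2).tendsto 1) (by norm_num)
    simpa using this.mono_left nhdsWithin_le_nhds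
  refine squeeze_zero_norm' ?_ hbound
  filter_upwards [Ioo_mem_nhdsLT zero_lt_one] with α hα using abs_cfD_le hα hat hM hg

theorem LipschitzOnWith.tendsto_cfD {a t : ℝ} {K : ℝ≥0} {g : ℝ → ℝ}
    (hg : LipschitzOnWith K g (Icc a t)) (hat : a < t) :
    Tendsto (fun α => cfD a α g t) (𝓝[<] 1) (𝓝 (g t)) := by
  have hint : IntervalIntegrable g volume a t := hg.continuousOn.intervalIntegrable_of_Icc hat.le
  have hdist : ∀ τ ∈ Ioc a t, |g τ - g t| ≤ K * (t - τ) := fun τ hτ => by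
    simpa [Real.dist_eq, abs_of_nonpos (sub_nonpos.2 hτ.2)] using
      hg.dist_le_mul τ (Ioc_subset_Icc_self hτ) t (right_mem_Icc.2 hat.le)
  have hlim := (tendsto_cfD_zero_of_abs_le hat.le K.coe_nonneg hdist).add
    (tendsto_cfD_const hat (g t))
  rw [zero_add] at hlim
  refine hlim.congr fun α => ?_
  rw [cfD_sub hint intervalIntegrable_const, sub_add_cancel]

theorem cf_pointwise_tendsto_general (a b : ℝ) (f' f'' : ℝ → ℝ)
    (hderiv' : ∀ t ∈ Set.Icc a b, HasDerivWithinAt f' (f'' t) (Set.Icc a b) t)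
    (hcont : ContinuousOn f'' (Set.Icc a b)) :
    ∀ t ∈ Set.Ioc a b,
      Tendsto (fun α => cfD a α f' t) (nhdsWithin 1 (Set.Iio 1)) (nhds (f' t)) := by
  intro t ⟨hat, htb⟩
  obtain ⟨M, hM⟩ := isCompact_Icc.exists_bound_of_continuousOn hcont
  have hlip : LipschitzOnWith M.toNNReal f' (Icc a b) :=
    (convex_Icc a b).lipschitzOnWith_of_nnnorm_hasDerivWithin_le hderiv' fun x hx => by
      rw [← NNReal.coe_le_coe, coe_nnnorm, Real.coe_toNNReal']
      exact (hM x hx).trans (le_max_left _ _)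
  exact (hlip.mono (Icc_subset_Icc_right htb)).tendsto_cfD hat

/-- For `f ∈ C²[a,b]`, `ᶜᶠ_aDᵅf(t) → f'(t)` as `α → 1⁻`, for every `t ∈ (a,b]`. -/
theorem cf_pointwise_tendsto (a b : ℝ) (hab : a < b) (f f' f'' : ℝ → ℝ)
    (hderiv : ∀ t ∈ Set.Icc a b, HasDerivWithinAt f (f' t) (Set.Icc a b) t)
    (hderiv' : ∀ t ∈ Set.Icc a b, HasDerivWithinAt f' (f'' t) (Set.Icc a b) t)
    (hcont : ContinuousOn f'' (Set.Icc a b)) :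
    ∀ t ∈ Set.Ioc a b,
      Tendsto (fun α => cfD a α f' t) (nhdsWithin 1 (Set.Iio 1)) (nhds (f' t)) :=
  cf_pointwise_tendsto_general a b f' f'' hderiv' hcont
end

section
/- Let b > 0 and f(t) = e^t on [0,b]. Then for every β ∈ (0,1), the Caputo–Fabrizio L¹ error satisfies E_{f,1}(β) = ‖ᶜᶠ₀D^{1−β}f − f'‖_{L¹(0,b)} = (β/(1−β))·(1 − e^{−((1−β)/β)·b}), and consequently lim_{β→0⁺} E_{f,1}(β)/β = 1. In particular the Caputo–Fabrizio L¹ error is not o(β) in general. -/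
/-! For `f = exp` the Caputo–Fabrizio convolution is explicit: with `c = (1 - β) / β`,
`ᶜᶠ₀D^{1-β} e^t = e^t - e^{-c t}`, so the error is the single exponential `e^{-c t}`, whose
integral over `(0, b)` is `(1 - e^{-c b}) / c`. As `β → 0⁺`, `c → ∞` and `1 / c ~ β`. -/

open MeasureTheory Filter Set

open Real Topology

lemma integral_exp_mul_add {c : ℝ} (hc : c ≠ 0) (d a b : ℝ) :
    ∫ x in a..b, exp (c * x + d) = (exp (c * b + d) - exp (c * a + d)) / c := by
  rw [intervalIntegral.integral_comp_mul_add (fun x => exp x) hc, integral_exp, smul_eq_mul,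
    inv_mul_eq_div]

/-- Since `1 + α / (1 - α) = 1 / (1 - α)`, the prefactor cancels the one produced by integrating
`exp ((1 + α / (1 - α)) τ)`. -/
theorem cfD_exp {α : ℝ} (hα : α ≠ 1) (a t : ℝ) :
    cfD a α exp t = exp t - exp (a - α / (1 - α) * (t - a)) := by
  have h1α : 1 - α ≠ 0 := sub_ne_zero.mpr hα.symm
  set k := α / (1 - α) with hk
  have hk1 : 1 + k = 1 / (1 - α) := by rw [hk]; field_simp; ring
  have hk1ne : 1 + k ≠ 0 := by rw [hk1]; exact one_div_ne_zero h1α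
  have hintegrand : ∀ τ, exp τ * exp (-k * (t - τ)) = exp ((1 + k) * τ + -k * t) := by
    intro τ
    rw [← exp_add]
    ring_nf
  simp only [cfD, ← hk, hintegrand, integral_exp_mul_add hk1ne, ← hk1]
  rw [mul_div_cancel₀ _ hk1ne]
  ring_nf

theorem abs_cfD_exp_sub_exp {α : ℝ} (hα : α ≠ 1) (a t : ℝ) :
    |cfD a α exp t - exp t| = exp (a - α / (1 - α) * (t - a)) := by
  rw [cfD_exp hα, sub_sub_cancel_left, abs_neg, abs_of_pos (exp_pos _)]

lemma integral_Ioo_exp_neg_mul {c : ℝ} (hc : c ≠ 0) {b : ℝ} (hb : 0 ≤ b) :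
    ∫ t in Ioo 0 b, exp (-c * t) = (1 - exp (-c * b)) / c := by
  have h := integral_exp_mul_add (neg_ne_zero.mpr hc) 0 0 b
  simp only [add_zero, mul_zero, exp_zero] at h
  rw [← integral_Ioc_eq_integral_Ioo, ← intervalIntegral.integral_of_le hb, h, div_neg,
    ← neg_div, neg_sub]

theorem integral_abs_cfD_exp_sub_exp {β : ℝ} (hβ0 : β ≠ 0) (hβ1 : β ≠ 1) {b : ℝ}
    (hb : 0 ≤ b) :
    ∫ t in Ioo 0 b, |cfD 0 (1 - β) exp t - exp t| =
      β / (1 - β) * (1 - exp (-((1 - β) / β) * b)) := by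
  have hc : (1 - β) / β ≠ 0 := div_ne_zero (sub_ne_zero.mpr hβ1.symm) hβ0
  have hα : 1 - β ≠ 1 := by simpa using hβ0
  simp only [abs_cfD_exp_sub_exp hα, sub_sub_cancel, zero_sub, sub_zero, ← neg_mul]
  rw [integral_Ioo_exp_neg_mul hc hb, div_eq_mul_one_div _ ((1 - β) / β), mul_comm,
    one_div_div]

lemma tendsto_one_sub_nhdsGT_zero : Tendsto (fun β : ℝ => 1 - β) (𝓝[>] 0) (𝓝 1) :=
  ((continuous_const.sub continuous_id).tendsto' 0 1 (sub_zero 1)).mono_left nhdsWithin_le_nhds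

lemma tendsto_one_sub_div_self_nhdsGT_zero :
    Tendsto (fun β : ℝ => (1 - β) / β) (𝓝[>] 0) atTop := by
  simpa only [div_eq_mul_inv] using
    tendsto_one_sub_nhdsGT_zero.pos_mul_atTop one_pos tendsto_inv_nhdsGT_zero

/-- For `f(t) = e^t` on `[0,b]` (so `f' = exp`), the Caputo–Fabrizio L¹ error
equals `(β/(1-β))(1 - e^{-((1-β)/β) b})` for every `β ∈ (0,1)`, and
consequently `E_{f,1}(β)/β → 1` as `β → 0⁺`. -/
theorem cf_exp_error (b : ℝ) (hb : 0 < b) :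
    (∀ β ∈ Set.Ioo (0 : ℝ) 1,
        (∫ t in Set.Ioo 0 b, |cfD 0 (1 - β) Real.exp t - Real.exp t|) =
          (β / (1 - β)) * (1 - Real.exp (-((1 - β) / β) * b))) ∧
    Tendsto (fun β : ℝ =>
        (∫ t in Set.Ioo 0 b, |cfD 0 (1 - β) Real.exp t - Real.exp t|) / β)
      (nhdsWithin 0 (Set.Ioi 0)) (nhds 1) := by
  have herror : ∀ β ∈ Ioo (0 : ℝ) 1, ∫ t in Ioo 0 b, |cfD 0 (1 - β) exp t - exp t| =
      β / (1 - β) * (1 - exp (-((1 - β) / β) * b)) := fun β hβ =>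
    integral_abs_cfD_exp_sub_exp hβ.1.ne' hβ.2.ne hb.le
  refine ⟨herror, ?_⟩
  have hexp : Tendsto (fun β : ℝ => exp (-((1 - β) / β) * b)) (𝓝[>] 0) (𝓝 0) :=
    tendsto_exp_atBot.comp <| tendsto_neg_atTop_atBot.comp
      (tendsto_one_sub_div_self_nhdsGT_zero.atTop_mul_const hb)
        |>.congr fun _ => (neg_mul _ _).symm
  have hlimit :
      Tendsto (fun β : ℝ => (1 - exp (-((1 - β) / β) * b)) / (1 - β)) (𝓝[>] 0) (𝓝 1) := by
    simpa [Pi.div_def] using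
      (tendsto_const_nhds.sub hexp).div tendsto_one_sub_nhdsGT_zero one_ne_zero
  refine hlimit.congr' ?_
  filter_upwards [Ioo_mem_nhdsGT (zero_lt_one' ℝ)] with β hβ
  rw [herror β hβ]
  have h1β : 1 - β ≠ 0 := sub_ne_zero.mpr hβ.2.ne'
  field_simp [hβ.1.ne', h1β]
end

section
/- Let m ∈ ℕ with m ≥ 2 and β ∈ (0,1). If v > 0 satisfies Γ(m)·E_{1,m}(−((1−β)/β)·v) = β, where E_{1,m} is the Mittag-Leffler function, then v ≥ m−1. -/
open MeasureTheory Filter Set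

/-!
With `Rₙ(s) = (-1)ⁿ (e^{-s} - ∑_{j<n} (-s)ʲ/j!) = sⁿ E_{1,n+1}(-s)` one has
`Rₙ₊₁ = sⁿ/n! - Rₙ` and `Rₙ₊₁' = Rₙ`. Hence `s Rₙ(s) - n Rₙ₊₁(s)` vanishes at `0` and its
derivative is the same expression for `n - 1`, so by induction `n Rₙ₊₁(s) ≤ s Rₙ(s)` for `s ≥ 0`,
i.e. `Γ(n+1) E_{1,n+1}(-s) ≥ n/(s+n)`. At `s = (1-β)v/β` the left side is `β`, and
`β (s + n) ≥ n` rearranges to `v ≥ n`.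
-/

open Finset Nat

lemma mittagLeffler_one_natCast_add_one (n : ℕ) (t : ℝ) :
    mittagLeffler 1 (n + 1) t = ∑' k : ℕ, t ^ k / (k + n)! := by
  refine tsum_congr fun k => ?_
  rw [show (1 : ℝ) * k + (n + 1) = ((k + n : ℕ) : ℝ) + 1 by push_cast; ring,
    Real.Gamma_nat_eq_factorial]

lemma pow_mul_mittagLeffler_one_natCast_add_one (n : ℕ) (t : ℝ) :
    t ^ n * mittagLeffler 1 (n + 1) t = Real.exp t - ∑ j ∈ range n, t ^ j / j ! := by
  have hexp : Real.exp t = ∑' j : ℕ, t ^ j / j ! := by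
    rw [Real.exp_eq_exp_ℝ, NormedSpace.exp_eq_tsum_div]
  rw [mittagLeffler_one_natCast_add_one, ← tsum_mul_left, eq_sub_iff_add_eq', hexp,
    ← (Real.summable_pow_div_factorial t).sum_add_tsum_nat_add n]
  congr 1
  refine tsum_congr fun k => ?_
  rw [pow_add]
  ring

noncomputable def expNegRemainder (n : ℕ) (s : ℝ) : ℝ :=
  (-1) ^ n * (Real.exp (-s) - ∑ j ∈ range n, (-s) ^ j / j !)

lemma expNegRemainder_eq_pow_mul_mittagLeffler (n : ℕ) (s : ℝ) :
    expNegRemainder n s = s ^ n * mittagLeffler 1 (n + 1) (-s) := by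
  rw [expNegRemainder, ← pow_mul_mittagLeffler_one_natCast_add_one, ← mul_assoc, ← mul_pow]
  simp

lemma expNegRemainder_succ (n : ℕ) (s : ℝ) :
    expNegRemainder (n + 1) s = s ^ n / (n ! : ℝ) - expNegRemainder n s := by
  have h : (-1 : ℝ) ^ n * (-s) ^ n = s ^ n := by rw [← mul_pow]; simp
  simp only [expNegRemainder, sum_range_succ, pow_succ]
  linear_combination h / (n ! : ℝ)

lemma expNegRemainder_succ_zero (n : ℕ) : expNegRemainder (n + 1) 0 = 0 := by
  simp [expNegRemainder, sum_range_succ']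

lemma hasDerivAt_expNegRemainder_succ (n : ℕ) (s : ℝ) :
    HasDerivAt (expNegRemainder (n + 1)) (expNegRemainder n s) s := by
  induction n generalizing s with
  | zero =>
    have h : HasDerivAt (fun s : ℝ => 1 - Real.exp (-s)) (Real.exp (-s)) s := by
      simpa using ((hasDerivAt_neg s).exp).const_sub 1
    convert h using 1
    · funext s
      simp [expNegRemainder]
    · simp [expNegRemainder]
  | succ n ih =>
    have hpow : HasDerivAt (fun s : ℝ => s ^ (n + 1) / (n + 1)!) (s ^ n / n !) s := by
      refine ((hasDerivAt_pow (n + 1) s).div_const ((n + 1)! : ℝ)).congr_deriv ?_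
      rw [Nat.add_sub_cancel, factorial_succ]
      push_cast
      field_simp
    rw [funext (expNegRemainder_succ (n + 1)), expNegRemainder_succ]
    exact hpow.sub (ih s)

lemma nat_mul_expNegRemainder_succ_le (n : ℕ) {s : ℝ} (hs : 0 ≤ s) :
    n * expNegRemainder (n + 1) s ≤ s * expNegRemainder n s := by
  induction n generalizing s with
  | zero => simpa [expNegRemainder] using by positivity
  | succ n ih =>
    set g : ℝ → ℝ := fun t => t * expNegRemainder (n + 1) t - (n + 1) * expNegRemainder (n + 2) t
    have hg : ∀ t, HasDerivAt g (t * expNegRemainder n t - n * expNegRemainder (n + 1) t) t := by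
      intro t
      refine (((hasDerivAt_id t).mul (hasDerivAt_expNegRemainder_succ n t)).sub
        ((hasDerivAt_expNegRemainder_succ (n + 1) t).const_mul ((n : ℝ) + 1))).congr_deriv ?_
      simp only [id_eq]
      ring
    have hmono : MonotoneOn g (Ici 0) :=
      monotoneOn_of_hasDerivWithinAt_nonneg (convex_Ici 0)
        (fun t _ => (hg t).continuousAt.continuousWithinAt) (fun t _ => (hg t).hasDerivWithinAt)
        (fun t ht => sub_nonneg.2 (ih (interior_subset ht)))
    have hg_le := hmono self_mem_Ici hs hs
    simp only [g, expNegRemainder_succ_zero] at hg_le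
    push_cast
    linarith

lemma natCast_div_add_le_gamma_mul_mittagLeffler (n : ℕ) {s : ℝ} (hs : 0 < s) :
    n / (s + n) ≤ Real.Gamma (n + 1) * mittagLeffler 1 (n + 1) (-s) := by
  have h := nat_mul_expNegRemainder_succ_le n hs.le
  rw [expNegRemainder_succ, expNegRemainder_eq_pow_mul_mittagLeffler] at h
  rw [Real.Gamma_nat_eq_factorial, div_le_iff₀ (by positivity)]
  have hsn : 0 < s ^ n := pow_pos hs n
  have hfac : (0 : ℝ) < n ! := by positivity
  field_simp at h
  nlinarith

/-- If `m ≥ 2`, `β ∈ (0,1)` and `v > 0` satisfies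
`Γ(m) E_{1,m}(-((1-β)/β) v) = β`, then `v ≥ m - 1`. -/
theorem ml_root_lower_bound (m : ℕ) (hm : 2 ≤ m) (β : ℝ)
    (hβ : β ∈ Set.Ioo (0 : ℝ) 1) (v : ℝ) (hv : 0 < v)
    (heq : Real.Gamma m * mittagLeffler 1 m (-((1 - β) / β) * v) = β) :
    (m : ℝ) - 1 ≤ v := by
  obtain ⟨hβ0, hβ1⟩ := hβ
  obtain ⟨n, rfl⟩ : ∃ n, m = n + 1 := ⟨m - 1, by omega⟩
  set s := (1 - β) / β * v with hs
  have hs0 : 0 < s := by positivity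
  have hbound := natCast_div_add_le_gamma_mul_mittagLeffler n hs0
  rw [← neg_mul, ← Nat.cast_succ, heq, div_le_iff₀ (by positivity)] at hbound
  have hsβ : s * β = (1 - β) * v := by rw [hs]; field_simp
  have hn : (1 - β) * n ≤ (1 - β) * v := by linarith
  push_cast
  linarith [le_of_mul_le_mul_left hn (sub_pos.2 hβ1)]
end
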